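/- Let M be a bounded open subset of ℝ², h > 0, and Ω = M × (−h, 0) ⊂ ℝ³. Let ψ : ℝ³ → ℝ be continuously differentiable, and let κ_h, κ_v, α > 0. Define ‖ψ‖_V² = κ_h(∫_Ω (∂_xψ)² + ∫_Ω (∂_yψ)²) + κ_v(∫_Ω (∂_zψ)² + α·∫_M ψ(x,y,0)² dx dy). Then ∫_Ω ψ² + ∫_Ω (∂_xψ)² + ∫_Ω (∂_yψ)² + ∫_Ω (∂_zψ)² ≤ max{1/κ_h, (1 + h²)/κ_v, 2h/(κ_v α)} · ‖ψ‖_V². -/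

import Mathlib

/-!
On every vertical segment `{(x, y)} × [a, b]`, writing `ψ(z) = ψ(b) - ∫_z^b ∂_zψ` and applying
Cauchy–Schwarz gives `ψ(z)² ≤ 2ψ(b)² + 2(b - z)∫_a^b (∂_zψ)²`; integrating in `z` yields the
one-dimensional Poincaré inequality `∫_a^b ψ² ≤ 2(b - a)ψ(b)² + (b - a)²∫_a^b (∂_zψ)²`, and
Fubini lifts it to `Ω`. With `[a, b] = [-h, 0]` this bounds `∫_Ω ψ²` by the boundary and vertical
terms of `‖ψ‖_V²`, and comparing coefficients with the maximum finishes the proof.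
-/

open MeasureTheory

/-- Partial derivative in the first coordinate. -/
noncomputable def pdx (g : ℝ × ℝ × ℝ → ℝ) (q : ℝ × ℝ × ℝ) : ℝ :=
  deriv (fun t => g (t, q.2.1, q.2.2)) q.1

/-- Partial derivative in the second coordinate. -/
noncomputable def pdy (g : ℝ × ℝ × ℝ → ℝ) (q : ℝ × ℝ × ℝ) : ℝ :=
  deriv (fun t => g (q.1, t, q.2.2)) q.2.1

/-- Partial derivative in the third coordinate. -/
noncomputable def pdz (g : ℝ × ℝ × ℝ → ℝ) (q : ℝ × ℝ × ℝ) : ℝ :=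
  deriv (fun t => g (q.1, q.2.1, t)) q.2.2

theorem sq_setIntegral_le_measureReal_mul {X : Type*} [MeasurableSpace X] {μ : Measure X}
    {s : Set X} {f : X → ℝ} (hs : μ s ≠ ⊤) (hf : IntegrableOn f s μ)
    (hf2 : IntegrableOn (fun x => f x ^ 2) s μ) :
    (∫ x in s, f x ∂μ) ^ 2 ≤ μ.real s * ∫ x in s, f x ^ 2 ∂μ := by
  rcases eq_or_ne (μ s) 0 with h0 | h0
  · simp [Measure.restrict_eq_zero.mpr h0]
  have hm : 0 < μ.real s := ENNReal.toReal_pos h0 hs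
  have jensen := (even_two.convexOn_pow (𝕜 := ℝ)).map_set_average_le
    (continuous_pow 2).continuousOn isClosed_univ h0 hs (ae_of_all _ fun _ => trivial) hf hf2
  simp only [setAverage_eq, smul_eq_mul, mul_pow] at jensen
  field_simp at jensen
  exact jensen

theorem sq_intervalIntegral_le {f : ℝ → ℝ} {a b : ℝ} (hab : a ≤ b) (hf : Continuous f) :
    (∫ x in a..b, f x) ^ 2 ≤ (b - a) * ∫ x in a..b, f x ^ 2 := by
  simpa [intervalIntegral.integral_of_le hab, Real.volume_real_Ioc_of_le hab] using
    sq_setIntegral_le_measureReal_mul (measure_Ioc_lt_top (μ := volume) (a := a) (b := b)).ne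
      hf.integrableOn_Ioc (hf.pow 2).integrableOn_Ioc

theorem sq_le_of_contDiff {g : ℝ → ℝ} (hg : ContDiff ℝ 1 g) {a z b : ℝ} (haz : a ≤ z)
    (hzb : z ≤ b) :
    g z ^ 2 ≤ 2 * g b ^ 2 + 2 * (b - z) * ∫ t in a..b, deriv g t ^ 2 := by
  have hg' : Continuous (deriv g) := hg.continuous_deriv le_rfl
  have ftc : ∫ t in z..b, deriv g t = g b - g z :=
    intervalIntegral.integral_deriv_eq_sub (fun x _ => hg.differentiable one_ne_zero x)
      (hg'.intervalIntegrable _ _)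
  have mono : ∫ t in z..b, deriv g t ^ 2 ≤ ∫ t in a..b, deriv g t ^ 2 :=
    intervalIntegral.integral_mono_interval haz hzb le_rfl
      (ae_of_all _ fun _ => sq_nonneg _) ((hg'.pow 2).intervalIntegrable _ _)
  have cs := sq_intervalIntegral_le hzb hg'
  rw [ftc] at cs
  nlinarith [sq_nonneg (2 * g b - g z), mul_le_mul_of_nonneg_left mono (sub_nonneg.mpr hzb)]

theorem integral_sq_le_of_contDiff {g : ℝ → ℝ} (hg : ContDiff ℝ 1 g) {a b : ℝ} (hab : a ≤ b) :
    ∫ z in a..b, g z ^ 2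
      ≤ 2 * (b - a) * g b ^ 2 + (b - a) ^ 2 * ∫ z in a..b, deriv g z ^ 2 := by
  set G := ∫ z in a..b, deriv g z ^ 2
  have hcont : Continuous fun z => 2 * g b ^ 2 + 2 * (b - z) * G := by fun_prop
  calc ∫ z in a..b, g z ^ 2 ≤ ∫ z in a..b, (2 * g b ^ 2 + 2 * (b - z) * G) :=
        intervalIntegral.integral_mono_on hab ((hg.continuous.pow 2).intervalIntegrable _ _)
          (hcont.intervalIntegrable _ _) fun z hz => sq_le_of_contDiff hg hz.1 hz.2
    _ = 2 * (b - a) * g b ^ 2 + (b - a) ^ 2 * G := by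
        have hlin : ∫ z in a..b, (b - z) = (b - a) ^ 2 / 2 := by
          rw [intervalIntegral.integral_comp_sub_left (fun x => x) b, integral_id]
          ring
        rw [intervalIntegral.integral_add intervalIntegrable_const
          ((by fun_prop : Continuous fun z => 2 * (b - z) * G).intervalIntegrable _ _)]
        simp only [intervalIntegral.integral_const, intervalIntegral.integral_mul_const,
          intervalIntegral.integral_const_mul, hlin, smul_eq_mul]
        ring

theorem setIntegral_slab_eq {α β γ : Type*} [MeasurableSpace α] [MeasurableSpace β]
    [MeasurableSpace γ] {μ : Measure α} {ν : Measure β} {ρ : Measure γ} [SFinite μ] [SFinite ν]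
    [SFinite ρ] {M : Set (α × β)} {I : Set γ} {f : α × β × γ → ℝ}
    (hf : IntegrableOn (fun p : (α × β) × γ => f (p.1.1, p.1.2, p.2)) (M ×ˢ I)
      ((μ.prod ν).prod ρ)) :
    ∫ q in {q : α × β × γ | (q.1, q.2.1) ∈ M ∧ q.2.2 ∈ I}, f q ∂μ.prod (ν.prod ρ)
      = ∫ xy in M, ∫ z in I, f (xy.1, xy.2, z) ∂ρ ∂μ.prod ν := by
  have hpre : MeasurableEquiv.prodAssoc ⁻¹' {q : α × β × γ | (q.1, q.2.1) ∈ M ∧ q.2.2 ∈ I}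
      = M ×ˢ I := rfl
  rw [← (measurePreserving_prodAssoc μ ν ρ).setIntegral_preimage_emb
    MeasurableEquiv.prodAssoc.measurableEmbedding, hpre]
  exact setIntegral_prod _ hf

theorem pdz_eq_fderiv {ψ : ℝ × ℝ × ℝ → ℝ} (hψ : Differentiable ℝ ψ) (q : ℝ × ℝ × ℝ) :
    pdz ψ q = fderiv ℝ ψ q (0, 0, 1) :=
  ((hψ q).hasFDerivAt.comp_hasDerivAt q.2.2
    ((hasDerivAt_const _ _).prodMk ((hasDerivAt_const _ _).prodMk (hasDerivAt_id _)))).deriv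

theorem ContDiff.continuous_pdz {ψ : ℝ × ℝ × ℝ → ℝ} (hψ : ContDiff ℝ 1 ψ) :
    Continuous (pdz ψ) := by
  rw [funext (pdz_eq_fderiv (hψ.differentiable one_ne_zero))]
  exact (hψ.continuous_fderiv one_ne_zero).clm_apply continuous_const

theorem integral_slab_sq_le {M : Set (ℝ × ℝ)} (hM : Bornology.IsBounded M) {a b : ℝ}
    (hab : a ≤ b) {ψ : ℝ × ℝ × ℝ → ℝ} (hψ : ContDiff ℝ 1 ψ) :
    ∫ q in {q : ℝ × ℝ × ℝ | (q.1, q.2.1) ∈ M ∧ q.2.2 ∈ Set.Ioo a b}, ψ q ^ 2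
      ≤ 2 * (b - a) * (∫ xy in M, ψ (xy.1, xy.2, b) ^ 2)
        + (b - a) ^ 2 * ∫ q in {q : ℝ × ℝ × ℝ | (q.1, q.2.1) ∈ M ∧ q.2.2 ∈ Set.Ioo a b},
            pdz ψ q ^ 2 := by
  have hbdd : Bornology.IsBounded (M ×ˢ Set.Ioo a b) := hM.prod (Metric.isBounded_Ioo a b)
  have integrable {f : ℝ × ℝ × ℝ → ℝ} (hf : Continuous f) :
      IntegrableOn (fun p : (ℝ × ℝ) × ℝ => f (p.1.1, p.1.2, p.2) ^ 2) (M ×ˢ Set.Ioo a b) :=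
    ((by fun_prop : Continuous fun p : (ℝ × ℝ) × ℝ => f (p.1.1, p.1.2, p.2) ^ 2).continuousOn
      |>.integrableOn_compact hbdd.isCompact_closure).mono_set subset_closure
  have fubini {f : ℝ × ℝ × ℝ → ℝ} (hf : Continuous f) :
      ∫ q in {q : ℝ × ℝ × ℝ | (q.1, q.2.1) ∈ M ∧ q.2.2 ∈ Set.Ioo a b}, f q ^ 2
        = ∫ xy in M, ∫ z in Set.Ioo a b, f (xy.1, xy.2, z) ^ 2 :=
    setIntegral_slab_eq (integrable hf)
  have integrable_inner {f : ℝ × ℝ × ℝ → ℝ} (hf : Continuous f) :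
      IntegrableOn (fun xy : ℝ × ℝ => ∫ z in Set.Ioo a b, f (xy.1, xy.2, z) ^ 2) M := by
    have h := integrable hf
    rw [IntegrableOn, Measure.volume_eq_prod, ← Measure.prod_restrict] at h
    exact h.integral_prod_left
  have hψb : IntegrableOn (fun xy : ℝ × ℝ => ψ (xy.1, xy.2, b) ^ 2) M :=
    ((by fun_prop : Continuous fun xy : ℝ × ℝ => ψ (xy.1, xy.2, b) ^ 2).continuousOn
      |>.integrableOn_compact hM.isCompact_closure).mono_set subset_closure
  have slice (xy : ℝ × ℝ) := integral_sq_le_of_contDiff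
    (hψ.comp (by fun_prop : ContDiff ℝ 1 fun t : ℝ => (xy.1, xy.2, t))) hab
  simp only [intervalIntegral.integral_of_le hab, integral_Ioc_eq_integral_Ioo] at slice
  have hpdz := hψ.continuous_pdz
  calc _ = ∫ xy in M, ∫ z in Set.Ioo a b, ψ (xy.1, xy.2, z) ^ 2 := fubini hψ.continuous
    _ ≤ ∫ xy in M, (2 * (b - a) * ψ (xy.1, xy.2, b) ^ 2
          + (b - a) ^ 2 * ∫ z in Set.Ioo a b, pdz ψ (xy.1, xy.2, z) ^ 2) :=
        setIntegral_mono (integrable_inner hψ.continuous)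
          ((hψb.const_mul _).fun_add ((integrable_inner hpdz).const_mul _)) slice
    _ = _ := by
        rw [integral_add (hψb.const_mul _) ((integrable_inner hpdz).const_mul _),
          integral_const_mul, integral_const_mul, fubini hpdz]

theorem add_le_max_mul_of_le {S X Y Z W h κh κv α : ℝ} (hκh : 0 < κh) (hκv : 0 < κv)
    (hα : 0 < α) (hX : 0 ≤ X) (hY : 0 ≤ Y) (hZ : 0 ≤ Z) (hW : 0 ≤ W)
    (hS : S ≤ 2 * h * W + h ^ 2 * Z) :
    S + X + Y + Z ≤ max (1 / κh) (max ((1 + h ^ 2) / κv) (2 * h / (κv * α))) *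
      (κh * (X + Y) + κv * (Z + α * W)) := by
  set C := max (1 / κh) (max ((1 + h ^ 2) / κv) (2 * h / (κv * α)))
  have hx : 1 ≤ C * κh := (div_le_iff₀ hκh).1 (le_max_left _ _)
  have hz : 1 + h ^ 2 ≤ C * κv :=
    (div_le_iff₀ hκv).1 ((le_max_left _ _).trans (le_max_right _ _))
  have hw : 2 * h ≤ C * (κv * α) :=
    (div_le_iff₀ (mul_pos hκv hα)).1 ((le_max_right _ _).trans (le_max_right _ _))
  nlinarith [mul_le_mul_of_nonneg_right hx (add_nonneg hX hY),
    mul_le_mul_of_nonneg_right hz hZ, mul_le_mul_of_nonneg_right hw hW]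

theorem stmt_4_general (M : Set (ℝ × ℝ)) (hMb : Bornology.IsBounded M)
    (h : ℝ) (hh : 0 < h) (ψ : ℝ × ℝ × ℝ → ℝ) (hψ : ContDiff ℝ 1 ψ)
    (κh κv α : ℝ) (hκh : 0 < κh) (hκv : 0 < κv) (hα : 0 < α)
    (Ω : Set (ℝ × ℝ × ℝ))
    (hΩ : Ω = {q : ℝ × ℝ × ℝ | (q.1, q.2.1) ∈ M ∧ q.2.2 ∈ Set.Ioo (-h) 0}) :
    (∫ q in Ω, (ψ q) ^ 2) + (∫ q in Ω, (pdx ψ q) ^ 2) + (∫ q in Ω, (pdy ψ q) ^ 2)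
        + (∫ q in Ω, (pdz ψ q) ^ 2)
      ≤ max (1 / κh) (max ((1 + h ^ 2) / κv) (2 * h / (κv * α))) *
          (κh * ((∫ q in Ω, (pdx ψ q) ^ 2) + ∫ q in Ω, (pdy ψ q) ^ 2)
            + κv * ((∫ q in Ω, (pdz ψ q) ^ 2)
                + α * ∫ q in M, (ψ (q.1, q.2, 0)) ^ 2)) := by
  have poincare := integral_slab_sq_le hMb (neg_nonpos.mpr hh.le) hψ
  rw [sub_neg_eq_add, zero_add, ← hΩ] at poincare
  exact add_le_max_mul_of_le hκh hκv hα (integral_nonneg fun _ => sq_nonneg _)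
    (integral_nonneg fun _ => sq_nonneg _) (integral_nonneg fun _ => sq_nonneg _)
    (integral_nonneg fun _ => sq_nonneg _) poincare

/-- The `V`-norm (VVV) controls the `H¹`-norm from below:
`‖ψ‖² + ‖∂_xψ‖² + ‖∂_yψ‖² + ‖∂_zψ‖² ≤ max{1/κ_h, (1+h²)/κ_v, 2h/(κ_v α)} ‖ψ‖_V²`. -/
theorem stmt_4 (M : Set (ℝ × ℝ)) (hM : IsOpen M) (hMb : Bornology.IsBounded M)
    (h : ℝ) (hh : 0 < h) (ψ : ℝ × ℝ × ℝ → ℝ) (hψ : ContDiff ℝ 1 ψ)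
    (κh κv α : ℝ) (hκh : 0 < κh) (hκv : 0 < κv) (hα : 0 < α)
    (Ω : Set (ℝ × ℝ × ℝ))
    (hΩ : Ω = {q : ℝ × ℝ × ℝ | (q.1, q.2.1) ∈ M ∧ q.2.2 ∈ Set.Ioo (-h) 0}) :
    (∫ q in Ω, (ψ q) ^ 2) + (∫ q in Ω, (pdx ψ q) ^ 2) + (∫ q in Ω, (pdy ψ q) ^ 2)
        + (∫ q in Ω, (pdz ψ q) ^ 2)
      ≤ max (1 / κh) (max ((1 + h ^ 2) / κv) (2 * h / (κv * α))) *
          (κh * ((∫ q in Ω, (pdx ψ q) ^ 2) + ∫ q in Ω, (pdy ψ q) ^ 2)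
            + κv * ((∫ q in Ω, (pdz ψ q) ^ 2)
                + α * ∫ q in M, (ψ (q.1, q.2, 0)) ^ 2)) :=
  stmt_4_general M hMb h hh ψ hψ κh κv α hκh hκv hα Ω hΩ
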